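/- arXiv:2505.05126 — 4 statements merged into one kernel-verified Lean document; each statement's English description precedes it below -/
import Mathlib

section
/- Fix τ ∈ (0,1). If U₁ is a τ-expectile Bellman image of V₁ and U₂ is a τ-expectile Bellman image of V₂, then max_{s} |U₁ s − U₂ s| ≤ γ · max_{s} |V₁ s − V₂ s|; that is, the τ-expectile Bellman operator is a γ-contraction in the sup norm. -/
open Finset

/-- `y` satisfies the τ-expectile first-order condition (FOC) for weights `v` and values `z`. -/
def ExpectileFOC {κ : Type*} [Fintype κ] (τ : ℝ) (v z : κ → ℝ) (y : ℝ) : Prop :=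
  τ * ∑ i, v i * max (z i - y) 0 = (1 - τ) * ∑ i, v i * max (y - z i) 0

/-- `U` is a τ-expectile Bellman image of `V`: for every state `s`, `U s` satisfies the
τ-FOC for weights `w s` and values `(a, s') ↦ ρ s (a, s') + γ * V s'`. -/
def IsExpectileBellmanImage {S A : Type*} [Fintype S] [Fintype A]
    (γ τ : ℝ) (w : S → A × S → ℝ) (ρ : S → A × S → ℝ) (V U : S → ℝ) : Prop :=
  ∀ s, ExpectileFOC τ (w s) (fun p => ρ s p + γ * V p.2) (U s)

/-!
The first-order condition says that `∑ᵢ vᵢ φ(zᵢ - y) = 0` for the piecewise linear function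
`φ t = τ t⁺ - (1 - τ) t⁻` (`expectileIdentification τ`), which is strictly increasing when
`0 < τ < 1`. Hence raising every value `zᵢ` by at most `c` raises the solution `y` by at most `c`.
The Bellman values `ρ + γ V` move by at most `γ ‖V₁ - V₂‖∞` when `V` is replaced by the other
value function, so the Bellman images move by at most as much.
-/

noncomputable def expectileIdentification (τ t : ℝ) : ℝ :=
  τ * max t 0 - (1 - τ) * max (-t) 0

theorem strictMono_expectileIdentification {τ : ℝ} (hτ : τ ∈ Set.Ioo (0 : ℝ) 1) :
    StrictMono (expectileIdentification τ) := by
  obtain ⟨hτ0, hτ1⟩ := hτ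
  intro t t' htt'
  simp only [expectileIdentification, max_def]
  split_ifs <;> nlinarith

theorem expectileFOC_iff_sum_expectileIdentification {κ : Type*} [Fintype κ]
    (τ : ℝ) (v z : κ → ℝ) (y : ℝ) :
    ExpectileFOC τ v z y ↔ ∑ i, v i * expectileIdentification τ (z i - y) = 0 := by
  simp only [ExpectileFOC, expectileIdentification, neg_sub, mul_sub, sum_sub_distrib,
    mul_left_comm _ τ, mul_left_comm _ (1 - τ), ← mul_sum, sub_eq_zero]

theorem ExpectileFOC.le_add_of_le_add {κ : Type*} [Fintype κ] {τ : ℝ}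
    (hτ : τ ∈ Set.Ioo (0 : ℝ) 1) {v z₁ z₂ : κ → ℝ} (hv : ∀ i, 0 ≤ v i) (hv1 : 0 < ∑ i, v i)
    {y₁ y₂ c : ℝ} (h₁ : ExpectileFOC τ v z₁ y₁) (h₂ : ExpectileFOC τ v z₂ y₂)
    (hz : ∀ i, z₁ i ≤ z₂ i + c) : y₁ ≤ y₂ + c := by
  by_contra! hy
  rw [expectileFOC_iff_sum_expectileIdentification] at h₁ h₂
  have hφ : ∀ i, expectileIdentification τ (z₁ i - y₁) < expectileIdentification τ (z₂ i - y₂) :=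
    fun i => strictMono_expectileIdentification hτ (by linarith [hz i])
  obtain ⟨i, -, hi⟩ := exists_lt_of_sum_lt (by simpa using hv1 : ∑ i, (0 : ℝ) < ∑ i, v i)
  have hlt : ∑ i, v i * expectileIdentification τ (z₁ i - y₁) <
      ∑ i, v i * expectileIdentification τ (z₂ i - y₂) :=
    sum_lt_sum (fun j _ => mul_le_mul_of_nonneg_left (hφ j).le (hv j))
      ⟨i, mem_univ i, mul_lt_mul_of_pos_left (hφ i) hi⟩
  linarith

theorem IsExpectileBellmanImage.le_add_mul {S A : Type*} [Fintype S] [Fintype A]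
    {γ τ : ℝ} (hγ : 0 ≤ γ) (hτ : τ ∈ Set.Ioo (0 : ℝ) 1) {w ρ : S → A × S → ℝ}
    (hw : ∀ s p, 0 ≤ w s p) (hw1 : ∀ s, 0 < ∑ p : A × S, w s p) {V₁ V₂ U₁ U₂ : S → ℝ} {M : ℝ}
    (h₁ : IsExpectileBellmanImage γ τ w ρ V₁ U₁) (h₂ : IsExpectileBellmanImage γ τ w ρ V₂ U₂)
    (hV : ∀ s, V₁ s ≤ V₂ s + M) (s : S) : U₁ s ≤ U₂ s + γ * M :=
  (h₁ s).le_add_of_le_add hτ (hw s) (hw1 s) (h₂ s) fun p => by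
    linarith [mul_le_mul_of_nonneg_left (hV p.2) hγ]

theorem expectileBellman_contraction_general {S A : Type*} [Fintype S] [Fintype A]
    [Nonempty S]
    (γ : ℝ) (hγ : γ ∈ Set.Ioo (0 : ℝ) 1)
    (w : S → A × S → ℝ) (hw : ∀ s p, 0 ≤ w s p) (hw1 : ∀ s, ∑ p : A × S, w s p = 1)
    (ρ : S → A × S → ℝ) (τ : ℝ) (hτ : τ ∈ Set.Ioo (0 : ℝ) 1)
    (V₁ V₂ U₁ U₂ : S → ℝ)
    (h₁ : IsExpectileBellmanImage γ τ w ρ V₁ U₁)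
    (h₂ : IsExpectileBellmanImage γ τ w ρ V₂ U₂) :
    Finset.univ.sup' Finset.univ_nonempty (fun s => |U₁ s - U₂ s|) ≤
      γ * Finset.univ.sup' Finset.univ_nonempty (fun s => |V₁ s - V₂ s|) := by
  set M := Finset.univ.sup' Finset.univ_nonempty (fun s => |V₁ s - V₂ s|)
  have hV : ∀ s, |V₁ s - V₂ s| ≤ M := fun s => le_sup' (fun s => |V₁ s - V₂ s|) (mem_univ s)
  have hV₁ : ∀ s, V₁ s ≤ V₂ s + M := fun s => by linarith [(abs_sub_le_iff.1 (hV s)).1]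
  have hV₂ : ∀ s, V₂ s ≤ V₁ s + M := fun s => by linarith [(abs_sub_le_iff.1 (hV s)).2]
  have hw1' : ∀ s, 0 < ∑ p : A × S, w s p := fun s => (hw1 s).symm ▸ one_pos
  refine sup'_le _ _ fun s _ => abs_sub_le_iff.2 ⟨?_, ?_⟩
  · linarith [h₁.le_add_mul hγ.1.le hτ hw hw1' h₂ hV₁ s]
  · linarith [h₂.le_add_mul hγ.1.le hτ hw hw1' h₁ hV₂ s]

/-- The τ-expectile Bellman operator is a γ-contraction in the sup norm. -/
theorem expectileBellman_contraction {S A : Type*} [Fintype S] [Fintype A]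
    [Nonempty S] [Nonempty A]
    (γ : ℝ) (hγ : γ ∈ Set.Ioo (0 : ℝ) 1)
    (w : S → A × S → ℝ) (hw : ∀ s p, 0 ≤ w s p) (hw1 : ∀ s, ∑ p : A × S, w s p = 1)
    (ρ : S → A × S → ℝ) (τ : ℝ) (hτ : τ ∈ Set.Ioo (0 : ℝ) 1)
    (V₁ V₂ U₁ U₂ : S → ℝ)
    (h₁ : IsExpectileBellmanImage γ τ w ρ V₁ U₁)
    (h₂ : IsExpectileBellmanImage γ τ w ρ V₂ U₂) :
    Finset.univ.sup' Finset.univ_nonempty (fun s => |U₁ s - U₂ s|) ≤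
      γ * Finset.univ.sup' Finset.univ_nonempty (fun s => |V₁ s - V₂ s|) :=
  expectileBellman_contraction_general γ hγ w hw hw1 ρ τ hτ V₁ V₂ U₁ U₂ h₁ h₂
end

section
/- For every τ ∈ (0,1) there exists a unique τ-expectile Bellman fixed point V_τ : S → ℝ. -/
open Finset

/-!
Write the FOC at `y` as `∑ᵢ vᵢ φ(zᵢ - y) = 0` with the score `φ(t) = τ t⁺ - (1 - τ) t⁻`.
The score is continuous and increases with slope at least `min τ (1 - τ)`, so the left-hand side
changes sign on `[-‖z‖, ‖z‖]` and decreases at a definite rate in `y`. Hence the expectile exists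
and moves by at most `ε` when all values move by at most `ε`: the expectile Bellman operator is a
well-defined `γ`-contraction for the sup distance, and Banach's fixed-point theorem applies.
-/

def expectileScore (τ t : ℝ) : ℝ := τ * max t 0 - (1 - τ) * max (-t) 0

section Score

variable {τ s t : ℝ}

lemma expectileScore_nonneg (hτ : 0 ≤ τ) (ht : 0 ≤ t) : 0 ≤ expectileScore τ t := by
  rw [expectileScore, max_eq_left ht, max_eq_right (neg_nonpos.2 ht)]
  nlinarith

lemma expectileScore_nonpos (hτ : τ ≤ 1) (ht : t ≤ 0) : expectileScore τ t ≤ 0 := by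
  rw [expectileScore, max_eq_right ht, max_eq_left (neg_nonneg.2 ht)]
  nlinarith

lemma min_mul_sub_le_expectileScore_sub (hst : s ≤ t) :
    min τ (1 - τ) * (t - s) ≤ expectileScore τ t - expectileScore τ s := by
  have h₁ : min τ (1 - τ) ≤ τ := min_le_left _ _
  have h₂ : min τ (1 - τ) ≤ 1 - τ := min_le_right _ _
  unfold expectileScore
  rcases le_total 0 s with hs | hs
  · rw [max_eq_left hs, max_eq_left (hs.trans hst), max_eq_right (neg_nonpos.2 hs),
      max_eq_right (neg_nonpos.2 (hs.trans hst))]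
    nlinarith
  rcases le_total 0 t with ht | ht
  · rw [max_eq_right hs, max_eq_left ht, max_eq_left (neg_nonneg.2 hs),
      max_eq_right (neg_nonpos.2 ht)]
    nlinarith
  · rw [max_eq_right hs, max_eq_right ht, max_eq_left (neg_nonneg.2 hs),
      max_eq_left (neg_nonneg.2 ht)]
    nlinarith

@[fun_prop]
lemma continuous_expectileScore : Continuous (expectileScore τ) := by
  unfold expectileScore
  fun_prop

end Score

section FOC

variable {κ : Type*} [Fintype κ] {τ : ℝ} {v z z' : κ → ℝ} {y y' ε : ℝ}

lemma expectileFOC_iff : ExpectileFOC τ v z y ↔ ∑ i, v i * expectileScore τ (z i - y) = 0 := by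
  simp only [ExpectileFOC, expectileScore, neg_sub, mul_sub, sum_sub_distrib, mul_sum,
    mul_left_comm (v _)]
  exact sub_eq_zero.symm

lemma exists_expectileFOC (hτ : τ ∈ Set.Icc (0 : ℝ) 1) (hv : ∀ i, 0 ≤ v i) :
    ∃ y, ExpectileFOC τ v z y := by
  have hz : ∀ i, |z i| ≤ ‖z‖ := fun i => norm_le_pi_norm z i
  have hcont : Continuous fun y => ∑ i, v i * expectileScore τ (z i - y) := by fun_prop
  have hlow : 0 ≤ ∑ i, v i * expectileScore τ (z i - -‖z‖) :=
    sum_nonneg fun i _ => mul_nonneg (hv i)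
      (expectileScore_nonneg hτ.1 (by linarith [neg_abs_le (z i), hz i]))
  have hhigh : ∑ i, v i * expectileScore τ (z i - ‖z‖) ≤ 0 :=
    sum_nonpos fun i _ => mul_nonpos_of_nonneg_of_nonpos (hv i)
      (expectileScore_nonpos hτ.2 (by linarith [le_abs_self (z i), hz i]))
  obtain ⟨y, -, hy⟩ := intermediate_value_Icc' (neg_le_self (norm_nonneg z))
    hcont.continuousOn ⟨hhigh, hlow⟩
  exact ⟨y, expectileFOC_iff.2 hy⟩

lemma ExpectileFOC.le_add (hτ : τ ∈ Set.Ioo (0 : ℝ) 1) (hv : ∀ i, 0 ≤ v i)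
    (hv₀ : 0 < ∑ i, v i) (hz : ∀ i, z' i ≤ z i + ε) (hy : ExpectileFOC τ v z y)
    (hy' : ExpectileFOC τ v z' y') : y' ≤ y + ε := by
  by_contra! h
  have hc : 0 < min τ (1 - τ) := lt_min hτ.1 (sub_pos.2 hτ.2)
  have hterm : ∀ i, min τ (1 - τ) * (y' - (y + ε)) ≤
      expectileScore τ (z i - y) - expectileScore τ (z' i - y') := fun i =>
    (mul_le_mul_of_nonneg_left (by linarith [hz i]) hc.le).trans
      (min_mul_sub_le_expectileScore_sub (by linarith [hz i]))
  have hsum : (∑ i, v i) * (min τ (1 - τ) * (y' - (y + ε))) ≤ 0 :=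
    calc (∑ i, v i) * (min τ (1 - τ) * (y' - (y + ε)))
        = ∑ i, v i * (min τ (1 - τ) * (y' - (y + ε))) := sum_mul _ _ _
      _ ≤ ∑ i, v i * (expectileScore τ (z i - y) - expectileScore τ (z' i - y')) :=
        sum_le_sum fun i _ => mul_le_mul_of_nonneg_left (hterm i) (hv i)
      _ = 0 := by
        simp only [mul_sub, sum_sub_distrib, expectileFOC_iff.1 hy, expectileFOC_iff.1 hy',
          sub_zero]
  exact (mul_pos hv₀ (mul_pos hc (sub_pos.2 h))).not_ge hsum

end FOC

section Bellman

variable {S A : Type*} [Fintype S] [Fintype A] {γ τ : ℝ} {w ρ : S → A × S → ℝ}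

lemma exists_isExpectileBellmanImage (hτ : τ ∈ Set.Icc (0 : ℝ) 1) (hw : ∀ s p, 0 ≤ w s p)
    (V : S → ℝ) : ∃ U, IsExpectileBellmanImage γ τ w ρ V U :=
  Classical.skolem.1 fun s => exists_expectileFOC hτ (hw s)

lemma IsExpectileBellmanImage.dist_le (hγ : 0 ≤ γ) (hτ : τ ∈ Set.Ioo (0 : ℝ) 1)
    (hw : ∀ s p, 0 ≤ w s p) (hw₀ : ∀ s, 0 < ∑ p, w s p) {V V' U U' : S → ℝ}
    (hU : IsExpectileBellmanImage γ τ w ρ V U) (hU' : IsExpectileBellmanImage γ τ w ρ V' U') :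
    dist U U' ≤ γ * dist V V' := by
  have hvalues : ∀ (W W' : S → ℝ) (s : S) (p : A × S),
      ρ s p + γ * W p.2 ≤ ρ s p + γ * W' p.2 + γ * dist W W' := fun W W' s p => by
    have := mul_le_mul_of_nonneg_left
      ((Real.sub_le_dist _ _).trans (dist_le_pi_dist W W' p.2)) hγ
    linarith
  rw [dist_pi_le_iff (mul_nonneg hγ dist_nonneg)]
  intro s
  rw [Real.dist_eq, abs_sub_le_iff]
  constructor
  · linarith [(hU' s).le_add hτ (hw s) (hw₀ s) (hvalues V V' s) (hU s)]
  · rw [dist_comm V V']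
    linarith [(hU s).le_add hτ (hw s) (hw₀ s) (hvalues V' V s) (hU' s)]

end Bellman

theorem expectileBellman_existsUnique_fixedPoint_general {S A : Type*} [Fintype S] [Fintype A]
    (γ : ℝ) (hγ : γ ∈ Set.Ioo (0 : ℝ) 1)
    (w : S → A × S → ℝ) (hw : ∀ s p, 0 ≤ w s p) (hw1 : ∀ s, ∑ p : A × S, w s p = 1)
    (ρ : S → A × S → ℝ) (τ : ℝ) (hτ : τ ∈ Set.Ioo (0 : ℝ) 1) :
    ∃! V : S → ℝ, IsExpectileBellmanImage γ τ w ρ V V := by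
  choose T hT using
    exists_isExpectileBellmanImage (γ := γ) (ρ := ρ) (Set.Ioo_subset_Icc_self hτ) hw
  have hw₀ : ∀ s, 0 < ∑ p, w s p := fun s => (hw1 s).symm ▸ one_pos
  have hT_dist : ∀ {V V' U : S → ℝ}, IsExpectileBellmanImage γ τ w ρ V U →
      dist U (T V') ≤ γ * dist V V' := fun hU => hU.dist_le hγ.1.le hτ hw hw₀ (hT _)
  have hT_contracting : ContractingWith ⟨γ, hγ.1.le⟩ T :=
    ⟨by exact_mod_cast hγ.2, LipschitzWith.of_dist_le_mul fun V V' => hT_dist (hT V)⟩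
  refine ⟨hT_contracting.fixedPoint T, ?_, fun V hV => ?_⟩
  · have h := hT (hT_contracting.fixedPoint T)
    rwa [hT_contracting.fixedPoint_isFixedPt.eq] at h
  · have hTV : dist V (T V) ≤ 0 := by simpa using hT_dist hV (V' := V)
    exact hT_contracting.fixedPoint_unique (dist_le_zero.1 hTV).symm

/-- For every `τ ∈ (0,1)` there exists a unique τ-expectile Bellman fixed point. -/
theorem expectileBellman_existsUnique_fixedPoint {S A : Type*} [Fintype S] [Fintype A]
    [Nonempty S] [Nonempty A]
    (γ : ℝ) (hγ : γ ∈ Set.Ioo (0 : ℝ) 1)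
    (w : S → A × S → ℝ) (hw : ∀ s p, 0 ≤ w s p) (hw1 : ∀ s, ∑ p : A × S, w s p = 1)
    (ρ : S → A × S → ℝ) (τ : ℝ) (hτ : τ ∈ Set.Ioo (0 : ℝ) 1) :
    ∃! V : S → ℝ, IsExpectileBellmanImage γ τ w ρ V V :=
  expectileBellman_existsUnique_fixedPoint_general γ hγ w hw hw1 ρ τ hτ
end

section
/- Fix τ ∈ (0,1) and R_max ≥ 0, and suppose |ρ s (a,s′)| ≤ R_max for all s, a, s′. Then every τ-expectile Bellman fixed point V satisfies max_{s} |V s| ≤ R_max/(1 − γ). -/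
open Finset

/-!
An expectile of values bounded in absolute value by `B` is itself bounded by `B`: above the
largest value the FOC has a vanishing left side and a positive right side, and the lower
bound follows by reflecting the values, which swaps `τ` and `1 - τ`. Applied to a fixed
point `V` with `M = max |V|`, the Bellman values are bounded by `R_max + γ M`, so
`M ≤ R_max + γ M`.
-/

namespace ExpectileFOC

variable {κ : Type*} [Fintype κ] {τ y B : ℝ} {v z : κ → ℝ}

theorem neg (h : ExpectileFOC τ v z y) : ExpectileFOC (1 - τ) v (-z) (-y) := by
  simp only [ExpectileFOC, Pi.neg_apply, sub_sub_cancel, neg_sub_neg] at h ⊢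
  exact h.symm

theorem le_of_forall_le (hτ : τ < 1) (hv : ∀ i, 0 ≤ v i) (hv1 : 0 < ∑ i, v i)
    (h : ExpectileFOC τ v z y) (hB : ∀ i, z i ≤ B) : y ≤ B := by
  by_contra! hy
  have upper_tail : ∑ i, v i * max (z i - y) 0 = 0 :=
    sum_eq_zero fun i _ => by rw [max_eq_right (by linarith [hB i]), mul_zero]
  have lower_tail : (y - B) * ∑ i, v i ≤ ∑ i, v i * max (y - z i) 0 := by
    rw [mul_sum]
    refine sum_le_sum fun i _ => ?_
    rw [mul_comm]
    exact mul_le_mul_of_nonneg_left ((sub_le_sub_left (hB i) y).trans (le_max_left _ _)) (hv i)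
  have : 0 < (1 - τ) * ∑ i, v i * max (y - z i) 0 :=
    mul_pos (sub_pos.2 hτ) ((mul_pos (sub_pos.2 hy) hv1).trans_le lower_tail)
  rw [ExpectileFOC, upper_tail, mul_zero] at h
  linarith

theorem le_of_forall_ge (hτ : 0 < τ) (hv : ∀ i, 0 ≤ v i) (hv1 : 0 < ∑ i, v i)
    (h : ExpectileFOC τ v z y) (hB : ∀ i, B ≤ z i) : B ≤ y :=
  neg_le_neg_iff.1 <| h.neg.le_of_forall_le (by linarith) hv hv1 fun i => neg_le_neg (hB i)

theorem abs_le (hτ : τ ∈ Set.Ioo (0 : ℝ) 1) (hv : ∀ i, 0 ≤ v i) (hv1 : 0 < ∑ i, v i)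
    (h : ExpectileFOC τ v z y) (hB : ∀ i, |z i| ≤ B) : |y| ≤ B :=
  _root_.abs_le.2 ⟨h.le_of_forall_ge hτ.1 hv hv1 fun i => (_root_.abs_le.1 (hB i)).1,
    h.le_of_forall_le hτ.2 hv hv1 fun i => (_root_.abs_le.1 (hB i)).2⟩

end ExpectileFOC

theorem IsExpectileBellmanImage.abs_le {S A : Type*} [Fintype S] [Fintype A] {γ τ Rmax M : ℝ}
    {w ρ : S → A × S → ℝ} {V U : S → ℝ} (hγ : 0 ≤ γ) (hτ : τ ∈ Set.Ioo (0 : ℝ) 1)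
    (hw : ∀ s p, 0 ≤ w s p) (hw1 : ∀ s, ∑ p : A × S, w s p = 1)
    (hρ : ∀ s p, |ρ s p| ≤ Rmax) (hVM : ∀ s, |V s| ≤ M)
    (hU : IsExpectileBellmanImage γ τ w ρ V U) (s : S) : |U s| ≤ Rmax + γ * M := by
  refine (hU s).abs_le hτ (hw s) (by rw [hw1 s]; exact one_pos) fun p => ?_
  calc |ρ s p + γ * V p.2| ≤ |ρ s p| + γ * |V p.2| := by
        rw [← abs_of_nonneg hγ, ← abs_mul, abs_of_nonneg hγ]; exact abs_add_le _ _
    _ ≤ Rmax + γ * M := add_le_add (hρ s p) (mul_le_mul_of_nonneg_left (hVM p.2) hγ)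

theorem expectileBellman_fixedPoint_bound_general {S A : Type*} [Fintype S] [Fintype A]
    [Nonempty S]
    (γ : ℝ) (hγ : γ ∈ Set.Ioo (0 : ℝ) 1)
    (w : S → A × S → ℝ) (hw : ∀ s p, 0 ≤ w s p) (hw1 : ∀ s, ∑ p : A × S, w s p = 1)
    (ρ : S → A × S → ℝ) (Rmax : ℝ) (hρ : ∀ s p, |ρ s p| ≤ Rmax)
    (τ : ℝ) (hτ : τ ∈ Set.Ioo (0 : ℝ) 1)
    (V : S → ℝ) (hV : IsExpectileBellmanImage γ τ w ρ V V) :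
    Finset.univ.sup' Finset.univ_nonempty (fun s => |V s|) ≤ Rmax / (1 - γ) := by
  set M := Finset.univ.sup' Finset.univ_nonempty (fun s => |V s|)
  have hVM : ∀ s, |V s| ≤ M := fun s => le_sup' (fun s => |V s|) (mem_univ s)
  have hM : M ≤ Rmax + γ * M :=
    sup'_le _ _ fun s _ => hV.abs_le hγ.1.le hτ hw hw1 hρ hVM s
  rw [le_div_iff₀ (sub_pos.2 hγ.2)]
  linarith

/-- Every τ-expectile Bellman fixed point is bounded by `R_max / (1 - γ)` in sup norm,
when rewards are bounded by `R_max`. -/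
theorem expectileBellman_fixedPoint_bound {S A : Type*} [Fintype S] [Fintype A]
    [Nonempty S] [Nonempty A]
    (γ : ℝ) (hγ : γ ∈ Set.Ioo (0 : ℝ) 1)
    (w : S → A × S → ℝ) (hw : ∀ s p, 0 ≤ w s p) (hw1 : ∀ s, ∑ p : A × S, w s p = 1)
    (ρ : S → A × S → ℝ) (Rmax : ℝ) (hR : 0 ≤ Rmax) (hρ : ∀ s p, |ρ s p| ≤ Rmax)
    (τ : ℝ) (hτ : τ ∈ Set.Ioo (0 : ℝ) 1)
    (V : S → ℝ) (hV : IsExpectileBellmanImage γ τ w ρ V V) :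
    Finset.univ.sup' Finset.univ_nonempty (fun s => |V s|) ≤ Rmax / (1 - γ) :=
  expectileBellman_fixedPoint_bound_general γ hγ w hw hw1 ρ Rmax hρ τ hτ V hV
end

section
/- Suppose the transition dynamics are deterministic, given by f : S → A → S, with behavior weights m : S → A → ℝ satisfying m s a ≥ 0 and ∑_{a} m s a = 1 for every s, and reward r : S → A → ℝ. Let V : ℝ → S → ℝ be such that for every τ ∈ (0,1) and every s ∈ S, V τ s satisfies the τ-expectile FOC for weights m s and values a ↦ r s a + γ·V τ (f s a). Let V* : S → ℝ satisfy the dataset-optimal Bellman equation V* s = max_{a ∈ supp(m s)} (r s a + γ·V* (f s a)) for every s. Then for every s ∈ S, V τ s converges to V* s as τ → 1 from the left (i.e., Tendsto (fun τ => V τ s) (𝓝[<] 1) (𝓝 (V* s))). -/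
/-!
The first-order condition places the τ-expectile between the smallest and the largest target on
the support of the weights, so the fixed points `V τ` are bounded by `‖r‖ / (1 - γ)` uniformly
in `τ`. At a supported action `a₀` maximising the targets, the condition gives
`τ · m s a₀ · (max - V τ s) ≤ (1 - τ) · (spread of the targets)`; as the supported weights are
bounded below by some `p > 0`, `V τ s` falls short of the supported maximum of its own targets
by `O((1 - τ) / τ)`. That maximum is `γ`-Lipschitz in the sup norm of the value function,
whence `‖V τ - V*‖ ≤ γ ‖V τ - V*‖ + O((1 - τ) / τ)`.
-/

open Finset Filter Topology

section Expectile

variable {κ : Type*} [Fintype κ]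

noncomputable abbrev posSupport (v : κ → ℝ) : Finset κ := univ.filter fun i => 0 < v i

lemma ExpectileFOC.one_sub_neg {τ : ℝ} {v z : κ → ℝ} {y : ℝ} (h : ExpectileFOC τ v z y) :
    ExpectileFOC (1 - τ) v (-z) (-y) := by
  simpa only [ExpectileFOC, Pi.neg_apply, neg_sub_neg, sub_sub_cancel] using h.symm

lemma ExpectileFOC.exists_le {τ : ℝ} {v z : κ → ℝ} {y : ℝ} (h : ExpectileFOC τ v z y)
    (hτ : τ < 1) (hv : ∀ i, 0 ≤ v i) (hne : (posSupport v).Nonempty) :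
    ∃ i ∈ posSupport v, y ≤ z i := by
  by_contra! hlt
  have hleft : ∑ i, v i * max (z i - y) 0 = 0 := by
    refine sum_eq_zero fun i _ => ?_
    rcases (hv i).eq_or_lt with hvi | hvi
    · simp [← hvi]
    · simp [(hlt i (by simpa using hvi)).le]
  have hright : 0 < ∑ i, v i * max (y - z i) 0 := by
    obtain ⟨i, hi⟩ := hne
    refine sum_pos' (fun j _ => mul_nonneg (hv j) (le_max_right _ _)) ⟨i, mem_univ i, ?_⟩
    exact mul_pos (by simpa using hi) (lt_max_of_lt_left (sub_pos.2 (hlt i hi)))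
  rw [ExpectileFOC, hleft, mul_zero] at h
  linarith [mul_pos (sub_pos.2 hτ) hright]

lemma ExpectileFOC.exists_ge {τ : ℝ} {v z : κ → ℝ} {y : ℝ} (h : ExpectileFOC τ v z y)
    (hτ : 0 < τ) (hv : ∀ i, 0 ≤ v i) (hne : (posSupport v).Nonempty) :
    ∃ i ∈ posSupport v, z i ≤ y := by
  obtain ⟨i, hi, hle⟩ := h.one_sub_neg.exists_le (by linarith) hv hne
  exact ⟨i, hi, by simpa using hle⟩

lemma ExpectileFOC.le_sup' {τ : ℝ} {v z : κ → ℝ} {y : ℝ} (h : ExpectileFOC τ v z y)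
    (hτ : τ < 1) (hv : ∀ i, 0 ≤ v i) (hne : (posSupport v).Nonempty) :
    y ≤ (posSupport v).sup' hne z := by
  obtain ⟨i, hi, hle⟩ := h.exists_le hτ hv hne
  exact hle.trans (Finset.le_sup' z hi)

lemma ExpectileFOC.mul_sub_le {τ : ℝ} {v z : κ → ℝ} {y D : ℝ} (h : ExpectileFOC τ v z y)
    (hτ0 : 0 ≤ τ) (hτ1 : τ ≤ 1) (hv : ∀ i, 0 ≤ v i) (hv1 : ∑ i, v i = 1) (hD0 : 0 ≤ D)
    (hD : ∀ i ∈ posSupport v, y - z i ≤ D) (j : κ) :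
    τ * (v j * (z j - y)) ≤ (1 - τ) * D := by
  have hterm : ∀ i, v i * max (y - z i) 0 ≤ v i * D := by
    intro i
    rcases (hv i).eq_or_lt with hvi | hvi
    · simp [← hvi]
    · exact mul_le_mul_of_nonneg_left (max_le (hD i (by simpa using hvi)) hD0) hvi.le
  calc τ * (v j * (z j - y)) ≤ τ * ∑ i, v i * max (z i - y) 0 := by
        gcongr
        exact (mul_le_mul_of_nonneg_left (le_max_left _ _) (hv j)).trans
          (single_le_sum (f := fun i => v i * max (z i - y) 0)
            (fun i _ => mul_nonneg (hv i) (le_max_right _ _)) (mem_univ j))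
    _ = (1 - τ) * ∑ i, v i * max (y - z i) 0 := h
    _ ≤ (1 - τ) * ∑ i, v i * D :=
        mul_le_mul_of_nonneg_left (sum_le_sum fun i _ => hterm i) (by linarith)
    _ = (1 - τ) * D := by rw [← sum_mul, hv1, one_mul]

lemma ExpectileFOC.sup'_sub_le {τ : ℝ} {v z : κ → ℝ} {y D p : ℝ} (h : ExpectileFOC τ v z y)
    (hτ0 : 0 < τ) (hτ1 : τ < 1) (hv : ∀ i, 0 ≤ v i) (hv1 : ∑ i, v i = 1)
    (hne : (posSupport v).Nonempty) (hp : 0 < p) (hpv : ∀ i ∈ posSupport v, p ≤ v i)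
    (hD0 : 0 ≤ D) (hD : ∀ i ∈ posSupport v, y - z i ≤ D) :
    (posSupport v).sup' hne z - y ≤ (1 - τ) / τ * (D / p) := by
  obtain ⟨j, hj, hmax⟩ := exists_mem_eq_sup' hne z
  have hgap : 0 ≤ z j - y := sub_nonneg.2 (hmax ▸ h.le_sup' hτ1 hv hne)
  have key := h.mul_sub_le hτ0.le hτ1.le hv hv1 hD0 hD j
  have : τ * (p * (z j - y)) ≤ (1 - τ) * D :=
    le_trans (by gcongr; exact hpv j hj) key
  rw [hmax, div_mul_div_comm, le_div_iff₀ (by positivity)]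
  linarith

end Expectile

lemma Finset.abs_sup'_sub_sup'_le {ι : Type*} {t : Finset ι} (ht : t.Nonempty) {z w : ι → ℝ}
    {δ : ℝ} (h : ∀ i ∈ t, |z i - w i| ≤ δ) : |t.sup' ht z - t.sup' ht w| ≤ δ := by
  rw [abs_sub_le_iff, sub_le_iff_le_add, sub_le_iff_le_add]
  constructor <;> refine sup'_le ht _ fun i hi => ?_
  · linarith [(abs_le.1 (h i hi)).2, le_sup' w hi]
  · linarith [(abs_le.1 (h i hi)).1, le_sup' z hi]

lemma norm_le_div_one_sub_of_forall_abs_le {ι : Type*} [Fintype ι] {x : ι → ℝ} {c γ : ℝ}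
    (hc : 0 ≤ c) (hγ0 : 0 ≤ γ) (hγ1 : γ < 1) (h : ∀ i, |x i| ≤ c + γ * ‖x‖) :
    ‖x‖ ≤ c / (1 - γ) := by
  have : ‖x‖ ≤ c + γ * ‖x‖ := (pi_norm_le_iff_of_nonneg (by positivity)).2 h
  rw [le_div_iff₀ (by linarith)]
  linarith

lemma exists_pos_forall_le_of_pos {ι : Type*} [Fintype ι] (g : ι → ℝ) :
    ∃ p > 0, ∀ i, 0 < g i → p ≤ g i := by
  rcases (posSupport g).eq_empty_or_nonempty with h | h
  · exact ⟨1, one_pos, fun i hi => absurd hi (filter_eq_empty_iff.1 h (mem_univ i))⟩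
  · obtain ⟨j, hj, hmin⟩ := exists_min_image _ g h
    exact ⟨g j, by simpa using hj, fun i hi => hmin i (by simpa using hi)⟩

section Bellman

variable {S A : Type*} (r : S → A → ℝ) (γ : ℝ) (f : S → A → S)

def qValue (V : S → ℝ) (s : S) (a : A) : ℝ := r s a + γ * V (f s a)

variable [Fintype S] {r γ f}

lemma abs_qValue_sub_qValue_le (hγ : 0 ≤ γ) (V W : S → ℝ) (s : S) (a : A) :
    |qValue r γ f V s a - qValue r γ f W s a| ≤ γ * ‖V - W‖ := by
  have : qValue r γ f V s a - qValue r γ f W s a = γ * (V - W) (f s a) := by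
    simp only [qValue, Pi.sub_apply]; ring
  rw [this, abs_mul, abs_of_nonneg hγ]
  exact mul_le_mul_of_nonneg_left (norm_le_pi_norm (V - W) (f s a)) hγ

variable [Fintype A]

lemma abs_qValue_le (hγ : 0 ≤ γ) (V : S → ℝ) (s : S) (a : A) :
    |qValue r γ f V s a| ≤ ‖r‖ + γ * ‖V‖ := by
  have hr : |r s a| ≤ ‖r‖ := (norm_le_pi_norm (r s) a).trans (norm_le_pi_norm r s)
  have hV : |V (f s a)| ≤ ‖V‖ := norm_le_pi_norm V (f s a)
  calc |qValue r γ f V s a| ≤ |r s a| + γ * |V (f s a)| := by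
        simpa only [qValue, abs_mul, abs_of_nonneg hγ] using abs_add_le (r s a) (γ * V (f s a))
    _ ≤ ‖r‖ + γ * ‖V‖ := by gcongr

variable {m : S → A → ℝ} {τ : ℝ} {V : S → ℝ}

lemma norm_le_of_expectileFOC_qValue (hτ : τ ∈ Set.Ioo 0 1) (hγ0 : 0 ≤ γ) (hγ1 : γ < 1)
    (hm : ∀ s a, 0 ≤ m s a) (hsupp : ∀ s, (posSupport (m s)).Nonempty)
    (hV : ∀ s, ExpectileFOC τ (m s) (qValue r γ f V s) (V s)) :
    ‖V‖ ≤ ‖r‖ / (1 - γ) := by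
  refine norm_le_div_one_sub_of_forall_abs_le (norm_nonneg r) hγ0 hγ1 fun s => ?_
  obtain ⟨a, -, hle⟩ := (hV s).exists_le hτ.2 (hm s) (hsupp s)
  obtain ⟨b, -, hge⟩ := (hV s).exists_ge hτ.1 (hm s) (hsupp s)
  have ha := abs_le.1 (abs_qValue_le (r := r) (f := f) hγ0 V s a)
  have hb := abs_le.1 (abs_qValue_le (r := r) (f := f) hγ0 V s b)
  exact abs_le.2 ⟨by linarith, by linarith⟩

lemma norm_sub_le_of_expectileFOC_qValue (hτ : τ ∈ Set.Ioo 0 1) (hγ0 : 0 ≤ γ) (hγ1 : γ < 1)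
    (hm : ∀ s a, 0 ≤ m s a) (hm1 : ∀ s, ∑ a, m s a = 1)
    (hsupp : ∀ s, (posSupport (m s)).Nonempty) {p : ℝ} (hp : 0 < p)
    (hpm : ∀ s, ∀ a ∈ posSupport (m s), p ≤ m s a)
    (hV : ∀ s, ExpectileFOC τ (m s) (qValue r γ f V s) (V s)) {B : ℝ} (hB : ‖V‖ ≤ B)
    {W : S → ℝ} (hW : ∀ s, W s = (posSupport (m s)).sup' (hsupp s) (qValue r γ f W s)) :
    ‖V - W‖ ≤ (1 - τ) / τ * ((‖r‖ + (1 + γ) * B) / p) / (1 - γ) := by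
  obtain ⟨hτ0, hτ1⟩ := hτ
  have hB0 : 0 ≤ B := (norm_nonneg V).trans hB
  have hτ1' : 0 ≤ 1 - τ := by linarith
  refine norm_le_div_one_sub_of_forall_abs_le (by positivity) hγ0 hγ1 fun s => ?_
  have hD : ∀ a ∈ posSupport (m s), V s - qValue r γ f V s a ≤ ‖r‖ + (1 + γ) * B := by
    intro a _
    have := abs_le.1 (abs_qValue_le (r := r) (f := f) hγ0 V s a)
    have := abs_le.1 (norm_le_pi_norm V s)
    nlinarith
  have hup := (hV s).le_sup' hτ1 (hm s) (hsupp s)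
  have hgap := (hV s).sup'_sub_le hτ0 hτ1 (hm s) (hm1 s) (hsupp s) hp (hpm s) (by positivity) hD
  have hlip := abs_le.1 <| Finset.abs_sup'_sub_sup'_le (hsupp s) fun a _ =>
    abs_qValue_sub_qValue_le (r := r) (f := f) hγ0 V W s a
  rw [Pi.sub_apply, hW s, abs_le]
  constructor <;> linarith

end Bellman

theorem expectile_fixedPoint_tendsto_datasetOptimal_general {S A : Type*}
    [Fintype S] [Fintype A]
    (γ : ℝ) (hγ : γ ∈ Set.Ioo (0 : ℝ) 1)
    (f : S → A → S) (m : S → A → ℝ) (hm : ∀ s a, 0 ≤ m s a) (hm1 : ∀ s, ∑ a, m s a = 1)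
    (r : S → A → ℝ)
    (hsupp : ∀ s, (Finset.univ.filter fun a => 0 < m s a).Nonempty)
    (V : ℝ → S → ℝ)
    (hV : ∀ τ ∈ Set.Ioo (0 : ℝ) 1, ∀ s,
      ExpectileFOC τ (m s) (fun a => r s a + γ * V τ (f s a)) (V τ s))
    (Vstar : S → ℝ)
    (hVstar : ∀ s, Vstar s =
      (Finset.univ.filter fun a => 0 < m s a).sup' (hsupp s)
        (fun a => r s a + γ * Vstar (f s a))) :
    ∀ s, Tendsto (fun τ => V τ s) (𝓝[<] (1 : ℝ)) (𝓝 (Vstar s)) := by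
  obtain ⟨hγ0, hγ1⟩ := hγ
  obtain ⟨p, hp, hpm⟩ := exists_pos_forall_le_of_pos fun x : S × A => m x.1 x.2
  set K := (‖r‖ + (1 + γ) * (‖r‖ / (1 - γ))) / p
  have hdist : ∀ τ ∈ Set.Ioo (0 : ℝ) 1, ‖V τ - Vstar‖ ≤ (1 - τ) / τ * K / (1 - γ) :=
    fun τ hτ => norm_sub_le_of_expectileFOC_qValue hτ hγ0.le hγ1 hm hm1 hsupp hp
      (fun s a ha => hpm (s, a) (by simpa using ha)) (hV τ hτ)
      (norm_le_of_expectileFOC_qValue hτ hγ0.le hγ1 hm hsupp (hV τ hτ)) hVstar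
  have hrate : Tendsto (fun τ : ℝ => (1 - τ) / τ * K / (1 - γ)) (𝓝[<] 1) (𝓝 0) := by
    have hcont : ContinuousAt (fun τ : ℝ => (1 - τ) / τ * K / (1 - γ)) 1 := by
      fun_prop (disch := norm_num)
    simpa using hcont.tendsto.mono_left nhdsWithin_le_nhds
  have hconv : Tendsto V (𝓝[<] 1) (𝓝 Vstar) :=
    tendsto_iff_norm_sub_tendsto_zero.2 <| squeeze_zero' (.of_forall fun τ => norm_nonneg _)
      (mem_of_superset (Ioo_mem_nhdsLT zero_lt_one) hdist) hrate
  exact tendsto_pi_nhds.1 hconv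

/-- Under deterministic dynamics, the τ-expectile Bellman fixed points converge, as
`τ → 1⁻`, to the dataset-optimal value function. -/
theorem expectile_fixedPoint_tendsto_datasetOptimal {S A : Type*}
    [Fintype S] [Fintype A] [Nonempty S] [Nonempty A]
    (γ : ℝ) (hγ : γ ∈ Set.Ioo (0 : ℝ) 1)
    (f : S → A → S) (m : S → A → ℝ) (hm : ∀ s a, 0 ≤ m s a) (hm1 : ∀ s, ∑ a, m s a = 1)
    (r : S → A → ℝ)
    (hsupp : ∀ s, (Finset.univ.filter fun a => 0 < m s a).Nonempty)
    (V : ℝ → S → ℝ)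
    (hV : ∀ τ ∈ Set.Ioo (0 : ℝ) 1, ∀ s,
      ExpectileFOC τ (m s) (fun a => r s a + γ * V τ (f s a)) (V τ s))
    (Vstar : S → ℝ)
    (hVstar : ∀ s, Vstar s =
      (Finset.univ.filter fun a => 0 < m s a).sup' (hsupp s)
        (fun a => r s a + γ * Vstar (f s a))) :
    ∀ s, Tendsto (fun τ => V τ s) (𝓝[<] (1 : ℝ)) (𝓝 (Vstar s)) :=
  expectile_fixedPoint_tendsto_datasetOptimal_general γ hγ f m hm hm1 r hsupp V hV Vstar hVstar
end
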